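/- arXiv:2406.15745 — 2 statements merged into one kernel-verified Lean document; each statement's English description precedes it below -/
import Mathlib

section
/- Let R be a ring with proper involution, m a positive integer, and let x be an m-weak group inverse of a ∈ R. Then a^2 x is an m-weak group inverse of x; that is, (a^{W_m})^{W_m} = a^2 a^{W_m}. -/
/-- `z` is an `m`-weak group inverse of `a`. -/
def IsMWGI {R : Type*} [Ring R] [StarRing R] (m : ℕ) (a z : R) : Prop :=
  a * z ^ 2 = z ∧ ∃ k : ℕ, z * a ^ (k + 1) = a ^ k ∧
    star (a ^ k) * a ^ (m + 1) * z = star (a ^ k) * a ^ m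

/-- `w` is a weak group inverse of `b`. -/
def IsWGI {R : Type*} [Ring R] [StarRing R] (b w : R) : Prop :=
  b * w ^ 2 = w ∧ star (star b * b ^ 2 * w) = star b * b ^ 2 * w ∧
    ∃ k : ℕ, b ^ k = w * b ^ (k + 1)

/-- `x` is a group inverse of `u`. -/
def IsGroupInv {R : Type*} [Ring R] (u x : R) : Prop :=
  u * x ^ 2 = x ∧ u * x = x * u ∧ u = u ^ 2 * x

/-- `d` is a Drazin inverse of `a`. -/
def IsDrazin {R : Type*} [Ring R] (a d : R) : Prop :=
  a * d ^ 2 = d ∧ a * d = d * a ∧ ∃ k : ℕ, a ^ k = d * a ^ (k + 1)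

/-- `y` is a core-EP inverse of `a`. -/
def IsCoreEP {R : Type*} [Ring R] [StarRing R] (a y : R) : Prop :=
  a * y ^ 2 = y ∧ star (a * y) = a * y ∧ ∃ k : ℕ, a ^ k = y * a ^ (k + 1)

/-! From `a * x ^ 2 = x` we get `x = a ^ k * x ^ (k + 1)`; moving `a ^ k` past `x` with
`x * a ^ (k + 1) = a ^ k` then gives `x * a ^ (j + 1) * x = a ^ j * x`, in particular
`x * a * x = x` and `x * a ^ 2 * x = a * x`. These two identities verify the defining equations
of `a ^ 2 * x` as an `m`-weak group inverse of `x` directly, with index `k = 1`. -/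

section Monoid

variable {M : Type*} [Monoid M] {a x : M}

theorem pow_mul_pow_succ_of_mul_sq (h : a * x ^ 2 = x) (n : ℕ) : a ^ n * x ^ (n + 1) = x := by
  induction n with
  | zero => simp
  | succ n ih =>
    rw [pow_succ a n, show n + 1 + 1 = 2 + n by omega, pow_add, mul_assoc, ← mul_assoc a, h,
      ← pow_succ', ih]

theorem mul_pow_succ_mul_of_mul_sq {k : ℕ} (h₁ : a * x ^ 2 = x) (h₂ : x * a ^ (k + 1) = a ^ k)
    (j : ℕ) : x * a ^ (j + 1) * x = a ^ j * x :=
  calc x * a ^ (j + 1) * x = x * (a ^ (j + 1) * a ^ k) * x ^ (k + 1) := by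
        nth_rewrite 2 [← pow_mul_pow_succ_of_mul_sq h₁ k]
        simp only [mul_assoc]
    _ = a ^ j * (a ^ k * x ^ (k + 1)) := by
        rw [← pow_add, show j + 1 + k = k + 1 + j by omega, pow_add, ← mul_assoc, h₂,
          ← pow_add, add_comm, pow_add, mul_assoc]
    _ = a ^ j * x := by rw [pow_mul_pow_succ_of_mul_sq h₁]

end Monoid

theorem mwgi_of_mwgi_general {R : Type*} [Ring R] [StarRing R]
    (m : ℕ) (hm : 0 < m) (a x : R) (hx : IsMWGI m a x) :
    IsMWGI m x (a ^ 2 * x) := by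
  obtain ⟨h₁, k, h₂, -⟩ := hx
  have hxax : x * a * x = x := by
    simpa using mul_pow_succ_mul_of_mul_sq h₁ h₂ 0
  have hxa2x : x * a ^ 2 * x = a * x := by
    simpa using mul_pow_succ_mul_of_mul_sq h₁ h₂ 1
  refine ⟨?_, 1, ?_, ?_⟩
  · calc x * (a ^ 2 * x) ^ 2 = x * a ^ 2 * x * a ^ 2 * x := by simp only [sq, mul_assoc]
      _ = a * (a * x) := by rw [hxa2x, mul_assoc a x, mul_assoc a, hxa2x]
      _ = a ^ 2 * x := by rw [← mul_assoc, ← sq]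
  · calc a ^ 2 * x * x ^ (1 + 1) = a ^ 2 * x ^ (2 + 1) := by
          rw [mul_assoc, ← pow_succ']
      _ = x ^ 1 := by rw [pow_mul_pow_succ_of_mul_sq h₁, pow_one]
  · obtain ⟨n, rfl⟩ := Nat.exists_eq_add_one_of_ne_zero hm.ne'
    calc star (x ^ 1) * x ^ (n + 1 + 1) * (a ^ 2 * x)
        = star (x ^ 1) * (x ^ n * (x * (x * a ^ 2 * x))) := by simp only [pow_succ x, mul_assoc]
      _ = star (x ^ 1) * (x ^ n * (x * a * x)) := by rw [hxa2x, ← mul_assoc x a x]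
      _ = star (x ^ 1) * x ^ (n + 1) := by rw [hxax, ← pow_succ]

theorem mwgi_of_mwgi {R : Type*} [Ring R] [StarRing R]
    (hproper : ∀ x : R, star x * x = 0 → x = 0)
    (m : ℕ) (hm : 0 < m) (a x : R) (hx : IsMWGI m a x) :
    IsMWGI m x (a ^ 2 * x) :=
  mwgi_of_mwgi_general m hm a x hx
end

section
/- Let R be a ring with proper involution, let x be a weak group inverse of a ∈ R and let y be a weak group inverse of b ∈ R. If a b = b a and a^* b = b a^*, then a b has a weak group inverse, x y = y x, and x y is a weak group inverse of a b. -/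
/-!
A weak group inverse `x` of `a` lies in `a ^ n R` for every `n` (as `x = a ^ n x ^ (n + 1)`),
and `x ^ j a ^ j` acts as the identity on `a ^ k R`. If `c` commutes with `a` and `a⋆`, the
commutator `d = c x - x c` therefore lies in `a ^ k R`, so `d = x ^ 2 a ^ 2 d`. The
self-adjointness of `a⋆ a ^ 2 x` relates `a⋆ a ^ 2 d` to the commutator `d' = c⋆ x - x c⋆`,
which is killed by `a ^ (k + 1)` on the right; properness then gives `a ^ 2 d = 0`, hence
`d = 0`. Applied to `b`, `b⋆`, `a`, `a⋆` this makes `a, a⋆, x` commute with `b, b⋆, y`, and then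
the defining identities of `x y` are products of those of `x` and `y`.
-/

section Ring

variable {R : Type*} [Ring R]

lemma pow_mul_pow_succ_of_mul_sq_eq {a x : R} (h : a * x ^ 2 = x) (n : ℕ) :
    a ^ n * x ^ (n + 1) = x := by
  induction n with
  | zero => simp
  | succ n ih =>
    rw [pow_succ, show n + 1 + 1 = 2 + n by omega, pow_add, mul_assoc, ← mul_assoc a, h,
      ← pow_succ', ih]

lemma pow_eq_mul_pow_succ_of_le {a x : R} {k n : ℕ} (h : a ^ k = x * a ^ (k + 1)) (hkn : k ≤ n) :
    a ^ n = x * a ^ (n + 1) := by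
  obtain ⟨j, rfl⟩ := Nat.exists_eq_add_of_le hkn
  rw [pow_add, add_right_comm, pow_add, h, mul_assoc]

lemma pow_eq_pow_mul_pow_add {a x : R} {k : ℕ} (h : a ^ k = x * a ^ (k + 1)) (j : ℕ) :
    a ^ k = x ^ j * a ^ (k + j) := by
  induction j with
  | zero => simp
  | succ j ih =>
    rw [pow_succ, ← add_assoc, mul_assoc,
      ← pow_eq_mul_pow_succ_of_le h (Nat.le_add_right k j), ih]

end Ring

section StarRing

variable {R : Type*} [Ring R] [StarRing R]

-- `a⋆ a ^ 2 x = x⋆ (a⋆) ^ 2 a` moves `c` across `x` into `c⋆` across `x⋆`.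
lemma star_mul_sq_mul_commutator {a x c : R}
    (hself : star (star a * a ^ 2 * x) = star a * a ^ 2 * x) (hca : Commute c a)
    (hcsa : Commute c (star a)) :
    star a * (a ^ 2 * (c * x - x * c)) = -(star (a ^ 2 * (star c * x - x * star c)) * a) := by
  have hP : star a * a ^ 2 * x = star x * (star a ^ 2 * a) := by
    rw [← hself]; simp only [star_mul, star_pow, star_star, mul_assoc]
  have hcP : Commute c (star a * a ^ 2) := hcsa.mul_right (hca.pow_right 2)
  have hcQ : Commute c (star a ^ 2 * a) := (hcsa.pow_right 2).mul_right hca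
  calc star a * (a ^ 2 * (c * x - x * c))
      = c * (star a * a ^ 2 * x) - star a * a ^ 2 * x * c := by
        rw [← mul_assoc, mul_sub, ← mul_assoc, ← hcP.eq]
        simp only [mul_assoc]
    _ = (c * star x - star x * c) * (star a ^ 2 * a) := by
        rw [hP, sub_mul, mul_assoc (star x), ← hcQ.eq]
        simp only [mul_assoc]
    _ = -(star (a ^ 2 * (star c * x - x * star c)) * a) := by
        rw [star_mul, star_pow, star_sub, star_mul, star_mul, star_star, mul_assoc, ← neg_mul,
          neg_sub]

namespace IsWGI

theorem commute_of_commute_of_commute_star (hproper : ∀ t : R, star t * t = 0 → t = 0)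
    {a x c : R} (hx : IsWGI a x) (hca : Commute c a) (hcsa : Commute c (star a)) :
    Commute c x := by
  obtain ⟨hx2, hself, k, hk⟩ := hx
  have hsca : Commute (star c) a := by simpa using hcsa.star_star
  have hd : c * x - x * c = a ^ k * (c * x ^ (k + 1) - x ^ (k + 1) * c) := by
    have hxk := pow_mul_pow_succ_of_mul_sq_eq hx2 k
    conv_lhs => rw [← hxk]
    rw [mul_sub, (hca.pow_right k).left_comm, mul_assoc]
  have hd'a : (star c * x - x * star c) * a ^ (k + 1) = 0 := by
    rw [sub_mul, mul_assoc, ← hk, mul_assoc, (hsca.pow_right (k + 1)).eq, ← mul_assoc, ← hk,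
      (hsca.pow_right k).eq, sub_self]
  have had : a ^ 2 * (c * x - x * c) = 0 := by
    refine hproper _ ?_
    have had' : (star c * x - x * star c) * (a * (c * x - x * c)) = 0 := by
      rw [hd, ← mul_assoc a, ← pow_succ', ← mul_assoc, hd'a, zero_mul]
    calc star (a ^ 2 * (c * x - x * c)) * (a ^ 2 * (c * x - x * c))
        = star (c * x - x * c) * (star a * (star a * (a ^ 2 * (c * x - x * c)))) := by
          rw [star_mul, star_pow, sq (star a), mul_assoc, mul_assoc]
      _ = -(star (a ^ 2 * ((star c * x - x * star c) * (a * (c * x - x * c)))) * a) := by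
          rw [star_mul_sq_mul_commutator hself hca hcsa, mul_neg, mul_neg, star_mul, star_mul,
            star_mul, star_mul]
          simp only [mul_assoc]
      _ = 0 := by rw [had', mul_zero, star_zero, zero_mul, neg_zero]
  have hdd : c * x - x * c = x ^ 2 * (a ^ 2 * (c * x - x * c)) := by
    conv_lhs => rw [hd, pow_eq_pow_mul_pow_add hk 2]
    rw [hd, add_comm, pow_add, mul_assoc, mul_assoc]
  exact sub_eq_zero.mp (hdd.trans (by rw [had, mul_zero]))

theorem mul {a b x y : R} (hx : IsWGI a x) (hy : IsWGI b y) (hab : Commute a b)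
    (hsab : Commute (star a) b) (hay : Commute a y) (hsay : Commute (star a) y)
    (hxb : Commute x b) (hxsb : Commute x (star b)) (hxy : Commute x y) :
    IsWGI (a * b) (x * y) := by
  obtain ⟨hx2, hxself, kx, hkx⟩ := hx
  obtain ⟨hy2, hyself, ky, hky⟩ := hy
  have hasb : Commute a (star b) := by simpa using hsab.star_star
  have hsasb : Commute (star a) (star b) := hab.star_star
  refine ⟨?_, ?_, kx + ky, ?_⟩
  · rw [hxy.mul_pow, mul_assoc, ← mul_assoc b, (hxb.pow_left 2).eq.symm, mul_assoc, ← mul_assoc,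
      hx2, hy2]
  · have hQ : ∀ u : R, Commute u b → Commute u (star b) → Commute u y →
        Commute u (star b * b ^ 2 * y) :=
      fun u hb hsb hy => (hsb.mul_right (hb.pow_right 2)).mul_right hy
    have hPQ : Commute (star a * a ^ 2 * x) (star b * b ^ 2 * y) :=
      ((hQ _ hsab hsasb hsay).mul_left ((hQ _ hab hasb hay).pow_left 2)).mul_left
        (hQ _ hxb hxsb hxy)
    have hsplit : star (a * b) * (a * b) ^ 2 * (x * y)
        = (star a * a ^ 2 * x) * (star b * b ^ 2 * y) := by
      rw [star_mul, hab.mul_pow]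
      simp only [mul_assoc]
      rw [(hxb.pow_right 2).symm.left_comm, hsasb.symm.left_comm, (hasb.pow_left 2).symm.left_comm,
        hxsb.symm.left_comm]
    rw [hsplit, star_mul, hxself, hyself, hPQ.eq]
  · rw [hab.mul_pow, hab.mul_pow, pow_eq_mul_pow_succ_of_le hkx (Nat.le_add_right kx ky),
      pow_eq_mul_pow_succ_of_le hky (Nat.le_add_left ky kx)]
    simp only [mul_assoc]
    rw [(hay.pow_left _).left_comm]

end IsWGI

end StarRing

theorem wgi_mul {R : Type*} [Ring R] [StarRing R]
    (hproper : ∀ x : R, star x * x = 0 → x = 0)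
    (a b x y : R) (hx : IsWGI a x) (hy : IsWGI b y)
    (hab : a * b = b * a) (hsab : star a * b = b * star a) :
    x * y = y * x ∧ IsWGI (a * b) (x * y) := by
  have hab : Commute a b := hab
  have hsab : Commute (star a) b := hsab
  have hasb : Commute a (star b) := by simpa using hsab.star_star
  have hsasb : Commute (star a) (star b) := hab.star_star
  have hxb := hx.commute_of_commute_of_commute_star hproper hab.symm hsab.symm
  have hxsb := hx.commute_of_commute_of_commute_star hproper hasb.symm hsasb.symm
  have hay := hy.commute_of_commute_of_commute_star hproper hab hasb
  have hsay := hy.commute_of_commute_of_commute_star hproper hsab hsasb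
  have hxy := hy.commute_of_commute_of_commute_star hproper hxb.symm hxsb.symm
  exact ⟨hxy.eq, hx.mul hy hab hsab hay hsay hxb.symm hxsb.symm hxy⟩
end
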